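/- arXiv:1101.4446 — 2 statements merged into one kernel-verified Lean document; each statement's English description precedes it below -/
import Mathlib

section
/- For every δ > 0 there exists a frog-strategy S such that Succ(S, A_{sp}) ≥ 1 − δ, where A_{sp} := {b ∈ {0,1}^ω : lim_{t→∞} N_t(b)/t = 0} is the set of sparse sequences. -/
/-- A frog-strategy: for each infinite binary sequence `b` (0-indexed: `b i` is bit `b_{i+1}`),
a probability distribution on `ℕ ∪ {∞}`, where `some i` means "cross at minute `i+1`" and
`none` means "wait forever".  The distribution at minute `i+1` may depend only on the
first `i` bits of `b`. -/
structure FrogStrategy where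
  prob : (ℕ → Bool) → Option ℕ → ℝ
  nonneg : ∀ b o, 0 ≤ prob b o
  total : ∀ b, ∑' o : Option ℕ, prob b o = 1
  adapted : ∀ b b' : ℕ → Bool, ∀ i : ℕ,
    (∀ j, j < i → b j = b' j) → prob b (some i) = prob b' (some i)

/-- Success probability: total probability of crossing at a minute with no car. -/
noncomputable def succProb (S : FrogStrategy) (b : ℕ → Bool) : ℝ :=
  ∑' i : ℕ, if b i = false then S.prob b (some i) else 0

/-- Death probability: total probability of crossing at a minute with a car. -/
noncomputable def deathProb (S : FrogStrategy) (b : ℕ → Bool) : ℝ :=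
  ∑' i : ℕ, if b i = true then S.prob b (some i) else 0

/-- `cars b t` is `N_t(b) = b_1 + ⋯ + b_t`, the number of cars among the first `t` minutes. -/
def cars (b : ℕ → Bool) (t : ℕ) : ℕ :=
  ((Finset.range t).filter (fun i => b i = true)).card

/-- `b` is `ε`-weakly sparse if `lim_{s→∞} inf_{t ≥ s} N_t(b)/t ≤ ε`. -/
def epsWeaklySparse (ε : ℝ) (b : ℕ → Bool) : Prop :=
  Filter.liminf (fun t : ℕ => (cars b t : ℝ) / t) Filter.atTop ≤ ε

/-!
Given that it has not crossed yet, the frog crosses at minute `n + 1` with probability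
`r n = ε (1 + ε)^{-D n}`, where the penalty `D` grows by `ψ ≥ 1/ε` after each car and drops by
one after each free minute. Let `W n` be the probability of not having crossed before minute
`n + 1`. The potential `2 r n W n` drops by at least the death mass at a car, because the hazard
then shrinks by a factor `(1 + ε)^{-ψ} ≤ 1/2`, and grows by at most `2 ε r n W n` at a free minute.
Hence the death probability is at most `2 (r 0 + ε) = 4 ε`. On a sparse sequence the hazards are
not summable: otherwise `D` is positive from some `T` on, so
`D s = D T + ψ (cars in [T, s)) - (free minutes in [T, s))` for `s ≥ T`, which becomes negative.
So the frog crosses with probability one.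
-/

open Filter Topology Finset

theorem HasSum.option {M : Type*} [AddCommMonoid M] [TopologicalSpace M] [ContinuousAdd M]
    {α : Type*} {f : Option α → M} {a : M} (h : HasSum (fun i => f (some i)) a) :
    HasSum f (f none + a) := by
  have hsome : HasSum (fun o => if o = none then 0 else f o) a := by
    refine (Function.Injective.hasSum_iff (Option.some_injective α) ?_).1 h
    rintro (_ | i) hi
    · rfl
    · exact absurd ⟨i, rfl⟩ hi
  convert (hasSum_ite_eq none (f none)).add hsome using 1
  funext o
  cases o <;> simp

namespace FrogStrategy

theorem succProb_add_deathProb_add_prob_none (S : FrogStrategy) (b : ℕ → Bool) :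
    succProb S b + deathProb S b + S.prob b none = 1 := by
  have hsum : Summable (S.prob b) := by
    by_contra h
    simpa [tsum_eq_zero_of_not_summable h] using S.total b
  have hsome : Summable (fun i => S.prob b (some i)) :=
    hsum.comp_injective (Option.some_injective ℕ)
  have hsplit : ∀ i, S.prob b (some i) =
      (if b i = false then S.prob b (some i) else 0) +
        (if b i = true then S.prob b (some i) else 0) := by
    intro i
    cases b i <;> simp
  have hsucc : Summable fun i => if b i = false then S.prob b (some i) else 0 :=
    (hsome.indicator {i | b i = false}).congr fun i => by simp [Set.indicator_apply]
  have hdeath : Summable fun i => if b i = true then S.prob b (some i) else 0 :=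
    (hsome.indicator {i | b i = true}).congr fun i => by simp [Set.indicator_apply]
  have hall : HasSum (fun i => S.prob b (some i)) (succProb S b + deathProb S b) := by
    convert hsucc.hasSum.add hdeath.hasSum using 1
    · exact funext hsplit
    · rfl
  rw [← S.total b, hall.option.tsum_eq, add_comm]

end FrogStrategy

theorem cars_succ (b : ℕ → Bool) (t : ℕ) :
    cars b (t + 1) = cars b t + if b t then 1 else 0 := by
  cases h : b t <;> simp [cars, Finset.range_add_one, Finset.filter_insert, h]

theorem eventually_add_mul_cars_lt {b : ℕ → Bool}
    (hb : Tendsto (fun t : ℕ => (cars b t : ℝ) / t) atTop (𝓝 0)) (K C : ℕ) :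
    ∀ᶠ s in atTop, K + C * cars b s < s := by
  have hlim : Tendsto (fun s : ℕ => (K : ℝ) / s + C * ((cars b s : ℝ) / s)) atTop (𝓝 0) := by
    simpa using (tendsto_const_div_atTop_nhds_zero_nat (K : ℝ)).add (hb.const_mul (C : ℝ))
  filter_upwards [hlim.eventually (gt_mem_nhds one_pos), eventually_gt_atTop 0] with s hs hs0
  have hs0' : (0 : ℝ) < s := by exact_mod_cast hs0
  have hlt : ((K + C * cars b s : ℕ) : ℝ) / s < 1 := by
    push_cast
    rwa [add_div, mul_div_assoc]
  exact_mod_cast (div_lt_one hs0').1 hlt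

def survival (r : ℕ → ℝ) (n : ℕ) : ℝ := ∏ j ∈ range n, (1 - r j)

section survival

variable {r : ℕ → ℝ}

theorem survival_succ (r : ℕ → ℝ) (n : ℕ) : survival r (n + 1) = survival r n * (1 - r n) :=
  prod_range_succ _ n

theorem survival_nonneg (hr1 : ∀ n, r n ≤ 1) (n : ℕ) : 0 ≤ survival r n :=
  prod_nonneg fun j _ => sub_nonneg.2 (hr1 j)

theorem sum_range_mul_survival (r : ℕ → ℝ) (n : ℕ) :
    ∑ i ∈ range n, r i * survival r i = 1 - survival r n := by
  induction n with
  | zero => simp [survival]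
  | succ n ih => rw [sum_range_succ, ih, survival_succ]; ring

theorem summable_mul_survival (hr0 : ∀ n, 0 ≤ r n) (hr1 : ∀ n, r n ≤ 1) :
    Summable fun i => r i * survival r i :=
  summable_of_sum_range_le (c := 1) (fun i => mul_nonneg (hr0 i) (survival_nonneg hr1 i))
    fun n => by linarith [sum_range_mul_survival r n, survival_nonneg hr1 n]

theorem tsum_mul_survival_le_one (hr0 : ∀ n, 0 ≤ r n) (hr1 : ∀ n, r n ≤ 1) :
    ∑' i, r i * survival r i ≤ 1 :=
  Real.tsum_le_of_sum_range_le (fun i => mul_nonneg (hr0 i) (survival_nonneg hr1 i))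
    fun n => by linarith [sum_range_mul_survival r n, survival_nonneg hr1 n]

theorem survival_le_exp_neg_sum (hr1 : ∀ n, r n ≤ 1) (n : ℕ) :
    survival r n ≤ Real.exp (-∑ i ∈ range n, r i) := by
  rw [← sum_neg_distrib, Real.exp_sum]
  exact prod_le_prod (fun j _ => sub_nonneg.2 (hr1 j)) fun j _ => Real.one_sub_le_exp_neg _

theorem tendsto_survival_zero (hr0 : ∀ n, 0 ≤ r n) (hr1 : ∀ n, r n ≤ 1) (hr : ¬ Summable r) :
    Tendsto (survival r) atTop (𝓝 0) := by
  have hsum := (not_summable_iff_tendsto_nat_atTop_of_nonneg hr0).1 hr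
  exact squeeze_zero (survival_nonneg hr1) (survival_le_exp_neg_sum hr1)
    (Real.tendsto_exp_atBot.comp (tendsto_neg_atTop_atBot.comp hsum))

theorem tsum_mul_survival_eq_one (hr0 : ∀ n, 0 ≤ r n) (hr1 : ∀ n, r n ≤ 1) (hr : ¬ Summable r) :
    ∑' i, r i * survival r i = 1 := by
  refine ((hasSum_iff_tendsto_nat_of_nonneg
    (fun i => mul_nonneg (hr0 i) (survival_nonneg hr1 i)) 1).2 ?_).tsum_eq
  simpa [sum_range_mul_survival] using
    (tendsto_survival_zero hr0 hr1 hr).const_sub (1 : ℝ)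

end survival

section potential

variable {r : ℕ → ℝ} {b : ℕ → Bool} {A q ε : ℝ}

theorem ite_mul_survival_add_potential_le (hr0 : ∀ n, 0 ≤ r n) (hr1 : ∀ n, r n ≤ 1)
    (hA : 0 ≤ A) (hAq : 1 ≤ A * (1 - q)) (hε : 0 ≤ ε)
    (hcar : ∀ n, b n = true → r (n + 1) ≤ q * r n)
    (hsafe : ∀ n, b n = false → r (n + 1) ≤ (1 + ε) * r n) (n : ℕ) :
    (if b n = true then r n * survival r n else 0) + A * r (n + 1) * survival r (n + 1)
      ≤ A * r n * survival r n + A * ε * (r n * survival r n) := by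
  have hW := survival_nonneg hr1 n
  have hrW : 0 ≤ r n * survival r n := mul_nonneg (hr0 n) hW
  have hAW : 0 ≤ A * survival r n := mul_nonneg hA hW
  have hdecay : 0 ≤ A * survival r n * r (n + 1) * r n := by
    have := hr0 (n + 1); have := hr0 n; positivity
  rw [survival_succ]
  cases hb : b n
  · have := mul_le_mul_of_nonneg_left (hsafe n hb) hAW
    simp only [Bool.false_eq_true, ↓reduceIte, zero_add]
    nlinarith [mul_nonneg (mul_nonneg hA hε) hrW]
  · have := mul_le_mul_of_nonneg_left (hcar n hb) hAW
    have := mul_le_mul_of_nonneg_right hAq hrW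
    simp only [↓reduceIte]
    nlinarith [mul_nonneg (mul_nonneg hA hε) hrW]

theorem tsum_ite_mul_survival_le (hr0 : ∀ n, 0 ≤ r n) (hr1 : ∀ n, r n ≤ 1)
    (hA : 0 ≤ A) (hAq : 1 ≤ A * (1 - q)) (hε : 0 ≤ ε)
    (hcar : ∀ n, b n = true → r (n + 1) ≤ q * r n)
    (hsafe : ∀ n, b n = false → r (n + 1) ≤ (1 + ε) * r n) :
    ∑' i, (if b i = true then r i * survival r i else 0) ≤ A * (r 0 + ε) := by
  have hpartial : ∀ n, ∑ i ∈ range n, (if b i = true then r i * survival r i else 0)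
      + A * r n * survival r n ≤ A * r 0 + A * ε * ∑ i ∈ range n, r i * survival r i := by
    intro n
    induction n with
    | zero => simp [survival]
    | succ n ih =>
      rw [sum_range_succ, sum_range_succ, mul_add]
      linarith [ite_mul_survival_add_potential_le hr0 hr1 hA hAq hε hcar hsafe n]
  refine Real.tsum_le_of_sum_range_le (fun i => by split_ifs <;>
    simp [mul_nonneg (hr0 i) (survival_nonneg hr1 i)]) fun n => ?_
  have := hpartial n
  rw [sum_range_mul_survival] at this
  linarith [mul_nonneg (mul_nonneg hA (hr0 n)) (survival_nonneg hr1 n),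
    mul_nonneg (mul_nonneg hA hε) (survival_nonneg hr1 n)]

end potential

namespace FrogStrategy

/-- The strategy that, not having crossed yet, crosses at minute `i + 1` with conditional
probability `h b i`. -/
noncomputable def ofHazard (h : (ℕ → Bool) → ℕ → ℝ) (h0 : ∀ b i, 0 ≤ h b i) (h1 : ∀ b i, h b i ≤ 1)
    (hadapted : ∀ b b' i, (∀ j, j < i → b j = b' j) → h b i = h b' i) : FrogStrategy where
  prob b o := o.elim (1 - ∑' i, h b i * survival (h b) i) fun i => h b i * survival (h b) i
  nonneg b o := by
    cases o with
    | none => exact sub_nonneg.2 (tsum_mul_survival_le_one (h0 b) (h1 b))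
    | some i => exact mul_nonneg (h0 b i) (survival_nonneg (h1 b) i)
  total b := by
    simpa using ((summable_mul_survival (h0 b) (h1 b)).hasSum.option
      (f := fun o => o.elim (1 - ∑' i, h b i * survival (h b) i)
        fun i => h b i * survival (h b) i)).tsum_eq
  adapted b b' i hbb' := by
    have hsurv : survival (h b) i = survival (h b') i :=
      prod_congr rfl fun j hj => by
        rw [hadapted b b' j fun k hk => hbb' k (hk.trans (mem_range.1 hj))]
    simp only [Option.elim, hadapted b b' i hbb', hsurv]

variable {h : (ℕ → Bool) → ℕ → ℝ} {h0 : ∀ b i, 0 ≤ h b i} {h1 : ∀ b i, h b i ≤ 1}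
  {hadapted : ∀ b b' i, (∀ j, j < i → b j = b' j) → h b i = h b' i}

theorem ofHazard_prob_none {b : ℕ → Bool} (hb : ¬ Summable (h b)) :
    (ofHazard h h0 h1 hadapted).prob b none = 0 := by
  simp [ofHazard, tsum_mul_survival_eq_one (h0 b) (h1 b) hb]

end FrogStrategy

def penalty (ψ : ℕ) (b : ℕ → Bool) : ℕ → ℕ
  | 0 => 0
  | n + 1 => if b n then penalty ψ b n + ψ else penalty ψ b n - 1

section penalty

variable {ψ : ℕ} {b : ℕ → Bool}

theorem penalty_congr {b' : ℕ → Bool} : ∀ {i : ℕ}, (∀ j, j < i → b j = b' j) →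
    penalty ψ b i = penalty ψ b' i
  | 0, _ => rfl
  | i + 1, h => by
    simp only [penalty, h i i.lt_succ_self, penalty_congr fun j hj => h j (hj.trans i.lt_succ_self)]

theorem penalty_add_eq {T s : ℕ} (hpos : ∀ n, T ≤ n → penalty ψ b n ≠ 0) (hs : T ≤ s) :
    penalty ψ b s + s + (ψ + 1) * cars b T = penalty ψ b T + T + (ψ + 1) * cars b s := by
  induction s, hs using Nat.le_induction with
  | base => rfl
  | succ s hs ih =>
    have := hpos s hs
    rw [cars_succ, penalty]
    cases b s <;> simp only [Bool.false_eq_true, ↓reduceIte] <;> grind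

noncomputable def penaltyHazard (ε : ℝ) (ψ : ℕ) (b : ℕ → Bool) (n : ℕ) : ℝ :=
  ε * (1 + ε)⁻¹ ^ penalty ψ b n

variable {ε : ℝ}

theorem penaltyHazard_congr {b' : ℕ → Bool} {i : ℕ} (h : ∀ j, j < i → b j = b' j) :
    penaltyHazard ε ψ b i = penaltyHazard ε ψ b' i := by
  rw [penaltyHazard, penaltyHazard, penalty_congr h]

theorem penaltyHazard_nonneg (hε : 0 ≤ ε) (n : ℕ) : 0 ≤ penaltyHazard ε ψ b n := by
  unfold penaltyHazard
  positivity

theorem penaltyHazard_le (hε : 0 ≤ ε) (n : ℕ) : penaltyHazard ε ψ b n ≤ ε :=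
  mul_le_of_le_one_right hε (pow_le_one₀ (by positivity) (inv_le_one_of_one_le₀ (by linarith)))

theorem penaltyHazard_succ_of_true {n : ℕ} (hb : b n = true) :
    penaltyHazard ε ψ b (n + 1) = (1 + ε)⁻¹ ^ ψ * penaltyHazard ε ψ b n := by
  simp only [penaltyHazard, penalty, hb, ↓reduceIte, pow_add]
  ring

theorem penaltyHazard_succ_le_of_false (hε : 0 ≤ ε) {n : ℕ} (hb : b n = false) :
    penaltyHazard ε ψ b (n + 1) ≤ (1 + ε) * penaltyHazard ε ψ b n := by
  have hinv : (1 + ε) * (1 + ε)⁻¹ = 1 := mul_inv_cancel₀ (by positivity)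
  have hpow : (1 + ε)⁻¹ ^ (penalty ψ b n - 1 + 1) ≤ (1 + ε)⁻¹ ^ penalty ψ b n :=
    pow_le_pow_of_le_one (by positivity) (inv_le_one_of_one_le₀ (by linarith)) (by omega)
  simp only [penaltyHazard, penalty, hb, Bool.false_eq_true, ↓reduceIte]
  calc ε * (1 + ε)⁻¹ ^ (penalty ψ b n - 1)
      = (1 + ε) * (ε * (1 + ε)⁻¹ ^ (penalty ψ b n - 1 + 1)) := by
        linear_combination (-ε * (1 + ε)⁻¹ ^ (penalty ψ b n - 1)) * hinv
    _ ≤ (1 + ε) * (ε * (1 + ε)⁻¹ ^ penalty ψ b n) := by gcongr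

theorem not_summable_penaltyHazard (hε : 0 < ε)
    (hb : Tendsto (fun t : ℕ => (cars b t : ℝ) / t) atTop (𝓝 0)) :
    ¬ Summable (penaltyHazard ε ψ b) := by
  intro hsum
  obtain ⟨T, hT⟩ := eventually_atTop.1 (hsum.tendsto_atTop_zero.eventually (gt_mem_nhds hε))
  have hpos : ∀ n, T ≤ n → penalty ψ b n ≠ 0 := fun n hn h0 => by
    simpa [penaltyHazard, h0] using hT n hn
  obtain ⟨s, hs⟩ := ((eventually_add_mul_cars_lt hb (penalty ψ b T + T) (ψ + 1)).and
    (eventually_ge_atTop T)).exists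
  have := penalty_add_eq hpos hs.2
  omega

end penalty

noncomputable def penaltyStrategy {ε : ℝ} (hε0 : 0 ≤ ε) (hε1 : ε ≤ 1) (ψ : ℕ) : FrogStrategy :=
  FrogStrategy.ofHazard (penaltyHazard ε ψ) (fun _ => penaltyHazard_nonneg hε0)
    (fun _ n => (penaltyHazard_le hε0 n).trans hε1) fun _ _ _ => penaltyHazard_congr

theorem deathProb_penaltyStrategy_le {ε : ℝ} (hε0 : 0 ≤ ε) (hε1 : ε ≤ 1) {ψ : ℕ}
    (hψ : 1 ≤ ψ * ε) (b : ℕ → Bool) : deathProb (penaltyStrategy hε0 hε1 ψ) b ≤ 4 * ε := by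
  have hq : 1 ≤ 2 * (1 - (1 + ε)⁻¹ ^ ψ) := by
    have hbern : 2 ≤ (1 + ε) ^ ψ := by linarith [one_add_mul_le_pow (by linarith : -2 ≤ ε) ψ]
    rw [inv_pow]
    have := inv_anti₀ (by norm_num) hbern
    linarith
  calc deathProb (penaltyStrategy hε0 hε1 ψ) b ≤ 2 * (penaltyHazard ε ψ b 0 + ε) :=
        tsum_ite_mul_survival_le (penaltyHazard_nonneg hε0)
          (fun n => (penaltyHazard_le hε0 n).trans hε1) zero_le_two hq hε0
          (fun n hn => (penaltyHazard_succ_of_true hn).le)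
          (fun n hn => penaltyHazard_succ_le_of_false hε0 hn)
    _ = 4 * ε := by simp only [penaltyHazard, penalty, pow_zero]; ring

theorem exists_succProb_ge_one_sub_four_mul {ε : ℝ} (hε0 : 0 < ε) (hε1 : ε ≤ 1) :
    ∃ S : FrogStrategy, ∀ b : ℕ → Bool,
      Tendsto (fun t : ℕ => (cars b t : ℝ) / t) atTop (𝓝 0) → 1 - 4 * ε ≤ succProb S b := by
  obtain ⟨ψ, hψ⟩ : ∃ ψ : ℕ, 1 ≤ ψ * ε := ⟨⌈ε⁻¹⌉₊, by
    simpa [hε0.ne'] using mul_le_mul_of_nonneg_right (Nat.le_ceil ε⁻¹) hε0.le⟩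
  refine ⟨penaltyStrategy hε0.le hε1 ψ, fun b hb => ?_⟩
  have hsum := FrogStrategy.succProb_add_deathProb_add_prob_none (penaltyStrategy hε0.le hε1 ψ) b
  have hnone : (penaltyStrategy hε0.le hε1 ψ).prob b none = 0 :=
    FrogStrategy.ofHazard_prob_none (not_summable_penaltyHazard hε0 hb)
  linarith [deathProb_penaltyStrategy_le hε0.le hε1 hψ b]

/-- Puzzle 2: for every `δ > 0` there is a frog-strategy succeeding with probability
`≥ 1 - δ` on every sparse car-stream (one with `lim_{t→∞} N_t(b)/t = 0`),
i.e. `Succ(S, A_{sp}) ≥ 1 - δ`. -/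
theorem puzzle2 (δ : ℝ) (hδ : 0 < δ) :
    ∃ S : FrogStrategy, ∀ b : ℕ → Bool,
      Filter.Tendsto (fun t : ℕ => (cars b t : ℝ) / t) Filter.atTop (nhds 0) →
      1 - δ ≤ succProb S b := by
  obtain ⟨S, hS⟩ := exists_succProb_ge_one_sub_four_mul (ε := min δ 1 / 4) (by positivity)
    (by linarith [min_le_right δ 1])
  exact ⟨S, fun b hb => by linarith [hS b hb, min_le_left δ 1]⟩
end

section
/- For every δ > 0 there exists a frog-strategy S such that Succ(S, A_{fin}) ≥ 1 − δ, where A_{fin} := {b ∈ {0,1}^ω : Σ_{i≥1} b_i < ∞} is the set of sequences containing only finitely many 1s. -/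
/-!
Conditionally on still waiting, the frog crosses at minute `i + 1` with probability
`c / 2 / 2 ^ Nᵢ`, where `Nᵢ` is the number of cars among the first `i` minutes. Each car is met
at a different value of `Nᵢ`, so the probability of crossing in front of a car is at most
`∑ₖ c / 2 / 2 ^ k = c`. With finitely many cars the hazard stays above a positive constant, so
the frog crosses with probability one; `c = min δ 1` gives success at least `1 - δ`.
-/

open Finset Filter Topology

section HazardRate

variable {h : ℕ → ℝ}

/-- The probability of crossing first at step `i` when, still waiting at step `i`, one crosses with
probability `h i`. -/
def hazardMass (h : ℕ → ℝ) (i : ℕ) : ℝ := (∏ j ∈ range i, (1 - h j)) * h i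

theorem sum_range_hazardMass (h : ℕ → ℝ) (n : ℕ) :
    ∑ i ∈ range n, hazardMass h i = 1 - ∏ j ∈ range n, (1 - h j) := by
  induction n with
  | zero => simp
  | succ n ih => rw [sum_range_succ, ih, prod_range_succ, hazardMass]; ring

theorem prod_one_sub_nonneg (h1 : ∀ i, h i ≤ 1) (n : ℕ) : 0 ≤ ∏ j ∈ range n, (1 - h j) :=
  prod_nonneg fun j _ => sub_nonneg.2 (h1 j)

theorem prod_one_sub_le_one (h0 : ∀ i, 0 ≤ h i) (h1 : ∀ i, h i ≤ 1) (n : ℕ) :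
    ∏ j ∈ range n, (1 - h j) ≤ 1 :=
  prod_le_one (fun j _ => sub_nonneg.2 (h1 j)) fun j _ => sub_le_self 1 (h0 j)

theorem prod_one_sub_le_exp_neg_sum (h1 : ∀ i, h i ≤ 1) (n : ℕ) :
    ∏ j ∈ range n, (1 - h j) ≤ Real.exp (-∑ j ∈ range n, h j) := by
  rw [← sum_neg_distrib, Real.exp_sum]
  exact prod_le_prod (fun j _ => sub_nonneg.2 (h1 j)) fun j _ => Real.one_sub_le_exp_neg (h j)

theorem hazardMass_nonneg (h0 : ∀ i, 0 ≤ h i) (h1 : ∀ i, h i ≤ 1) (i : ℕ) :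
    0 ≤ hazardMass h i :=
  mul_nonneg (prod_one_sub_nonneg h1 i) (h0 i)

theorem hazardMass_le (h0 : ∀ i, 0 ≤ h i) (h1 : ∀ i, h i ≤ 1) (i : ℕ) :
    hazardMass h i ≤ h i :=
  mul_le_of_le_one_left (h0 i) (prod_one_sub_le_one h0 h1 i)

theorem sum_range_hazardMass_le_one (h1 : ∀ i, h i ≤ 1) (n : ℕ) :
    ∑ i ∈ range n, hazardMass h i ≤ 1 := by
  rw [sum_range_hazardMass]
  linarith [prod_one_sub_nonneg h1 n]

theorem summable_hazardMass (h0 : ∀ i, 0 ≤ h i) (h1 : ∀ i, h i ≤ 1) :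
    Summable (hazardMass h) :=
  summable_of_sum_range_le (hazardMass_nonneg h0 h1) (sum_range_hazardMass_le_one h1)

theorem tsum_hazardMass_le_one (h0 : ∀ i, 0 ≤ h i) (h1 : ∀ i, h i ≤ 1) :
    ∑' i, hazardMass h i ≤ 1 :=
  Real.tsum_le_of_sum_range_le (hazardMass_nonneg h0 h1) (sum_range_hazardMass_le_one h1)

theorem hasSum_hazardMass_one (h0 : ∀ i, 0 ≤ h i) (h1 : ∀ i, h i ≤ 1) (hns : ¬Summable h) :
    HasSum (hazardMass h) 1 := by
  have hsum : Tendsto (fun n => ∑ j ∈ range n, h j) atTop atTop :=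
    (not_summable_iff_tendsto_nat_atTop_of_nonneg h0).1 hns
  have hprod : Tendsto (fun n => ∏ j ∈ range n, (1 - h j)) atTop (𝓝 0) :=
    squeeze_zero (prod_one_sub_nonneg h1) (prod_one_sub_le_exp_neg_sum h1)
      (Real.tendsto_exp_neg_atTop_nhds_zero.comp hsum)
  rw [hasSum_iff_tendsto_nat_of_nonneg (hazardMass_nonneg h0 h1)]
  simpa [sum_range_hazardMass] using hprod.const_sub 1

end HazardRate

namespace FrogStrategy

theorem summable_prob (S : FrogStrategy) (b : ℕ → Bool) : Summable (S.prob b) := by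
  by_contra hns
  simpa [tsum_eq_zero_of_not_summable hns] using S.total b

theorem succProb_add_deathProb (S : FrogStrategy) (b : ℕ → Bool) :
    succProb S b + deathProb S b = ∑' i, S.prob b (some i) := by
  have hsome : Summable fun i => S.prob b (some i) :=
    (S.summable_prob b).comp_injective (Option.some_injective ℕ)
  have hpart (v : Bool) : Summable fun i => if b i = v then S.prob b (some i) else 0 :=
    hsome.of_nonneg_of_le (fun i => by split_ifs <;> simp [S.nonneg])
      fun i => by split_ifs <;> simp [S.nonneg]
  rw [succProb, deathProb, ← (hpart false).tsum_add (hpart true)]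
  exact tsum_congr fun i => by cases b i <;> simp

noncomputable def ofMass (m : (ℕ → Bool) → ℕ → ℝ) (nonneg : ∀ b i, 0 ≤ m b i)
    (summable : ∀ b, Summable (m b)) (tsum_le_one : ∀ b, ∑' i, m b i ≤ 1)
    (adapted : ∀ b b' : ℕ → Bool, ∀ i : ℕ, (∀ j, j < i → b j = b' j) → m b i = m b' i) :
    FrogStrategy where
  prob b o := o.elim (1 - ∑' i, m b i) (m b)
  nonneg b o := by
    cases o with
    | none => exact sub_nonneg.2 (tsum_le_one b)
    | some i => exact nonneg b i
  total b := by
    have hsum := (hasSum_ite_eq none (1 - ∑' i, m b i)).add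
      ((hasSum_extend_zero (Option.some_injective ℕ)).2 (summable b).hasSum)
    rw [sub_add_cancel] at hsum
    refine HasSum.tsum_eq (hsum.congr_fun fun o => ?_)
    cases o with
    | none => simp
    | some i => simp [(Option.some_injective ℕ).extend_apply]
  adapted := adapted

end FrogStrategy

section Cars

variable {b b' : ℕ → Bool}

theorem cars_congr {t : ℕ} (h : ∀ j, j < t → b j = b' j) : cars b t = cars b' t := by
  unfold cars
  congr 1
  exact filter_congr fun j hj => by rw [h j (mem_range.1 hj)]

theorem cars_mono (b : ℕ → Bool) : Monotone (cars b) :=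
  fun _ _ hst => card_le_card (filter_subset_filter _ (range_subset_range.2 hst))

theorem cars_succ_of_true {i : ℕ} (h : b i = true) : cars b (i + 1) = cars b i + 1 := by
  unfold cars
  rw [range_add_one, filter_insert, if_pos h, card_insert_of_notMem (by simp)]

theorem cars_lt_cars {i j : ℕ} (h : b i = true) (hij : i < j) : cars b i < cars b j := by
  have := cars_mono b (Nat.succ_le_of_lt hij)
  rw [cars_succ_of_true h] at this
  omega

theorem cars_injOn (b : ℕ → Bool) : Set.InjOn (cars b) {i | b i = true} := by
  intro i hi j hj hij
  by_contra hne
  rcases Nat.lt_or_gt_of_ne hne with h | h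
  · exact (cars_lt_cars hi h).ne hij
  · exact (cars_lt_cars hj h).ne hij.symm

theorem cars_le_card (hb : {i | b i = true}.Finite) (t : ℕ) : cars b t ≤ hb.toFinset.card :=
  card_le_card fun i hi => by simpa using (mem_filter.1 hi).2

end Cars

section CarHazard

variable {c : ℝ} {b : ℕ → Bool}

noncomputable def carHazard (c : ℝ) (b : ℕ → Bool) (i : ℕ) : ℝ := c / 2 / 2 ^ cars b i

theorem carHazard_nonneg (hc : 0 ≤ c) (b : ℕ → Bool) (i : ℕ) : 0 ≤ carHazard c b i := by
  unfold carHazard; positivity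

theorem carHazard_le_one (hc1 : c ≤ 1) (b : ℕ → Bool) (i : ℕ) : carHazard c b i ≤ 1 :=
  div_le_one_of_le₀ (by linarith [one_le_pow₀ (M₀ := ℝ) one_le_two (n := cars b i)])
    (by positivity)

theorem hazardMass_carHazard_congr {b' : ℕ → Bool} {i : ℕ} (h : ∀ j, j < i → b j = b' j) :
    hazardMass (carHazard c b) i = hazardMass (carHazard c b') i := by
  have hle : ∀ k ≤ i, carHazard c b k = carHazard c b' k := fun k hk => by
    rw [carHazard, carHazard, cars_congr fun j hj => h j (hj.trans_le hk)]
  rw [hazardMass, hazardMass, hle i le_rfl,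
    prod_congr rfl fun k hk => by rw [hle k (mem_range.1 hk).le]]

/-- Distinct cars meet distinct car counts, so the hazards at car times form a subseries of
`∑ₖ c / 2 / 2 ^ k = c`. -/
theorem sum_carHazard_filter_le (hc : 0 ≤ c) (s : Finset ℕ) :
    ∑ i ∈ s with b i = true, carHazard c b i ≤ c := by
  calc ∑ i ∈ s with b i = true, carHazard c b i
      = ∑ k ∈ (s.filter (b · = true)).image (cars b), c / 2 / 2 ^ k :=
        (sum_image (f := fun k => c / 2 / 2 ^ k)
          fun i hi j hj => cars_injOn b (mem_filter.1 hi).2 (mem_filter.1 hj).2).symm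
    _ ≤ ∑' k : ℕ, c / 2 / 2 ^ k :=
        (summable_geometric_two' c).sum_le_tsum _ fun k _ => by positivity
    _ = c := tsum_geometric_two' c

theorem not_summable_carHazard (hc : 0 < c) (hb : {i | b i = true}.Finite) :
    ¬Summable (carHazard c b) := by
  intro hs
  have hpos : 0 < c / 2 / 2 ^ hb.toFinset.card := by positivity
  obtain ⟨i, hi⟩ := (hs.tendsto_atTop_zero.eventually (gt_mem_nhds hpos)).exists
  refine hi.not_ge (div_le_div_of_nonneg_left (by positivity) (by positivity) ?_)
  exact pow_le_pow_right₀ one_le_two (cars_le_card hb i)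

end CarHazard

noncomputable def hazardStrategy (c : ℝ) (hc : 0 ≤ c) (hc1 : c ≤ 1) : FrogStrategy :=
  FrogStrategy.ofMass (fun b => hazardMass (carHazard c b))
    (fun b => hazardMass_nonneg (carHazard_nonneg hc b) (carHazard_le_one hc1 b))
    (fun b => summable_hazardMass (carHazard_nonneg hc b) (carHazard_le_one hc1 b))
    (fun b => tsum_hazardMass_le_one (carHazard_nonneg hc b) (carHazard_le_one hc1 b))
    fun _ _ _ => hazardMass_carHazard_congr

section HazardStrategy

variable {c : ℝ} (hc : 0 ≤ c) (hc1 : c ≤ 1)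

theorem deathProb_hazardStrategy_le (b : ℕ → Bool) :
    deathProb (hazardStrategy c hc hc1) b ≤ c := by
  have h0 := carHazard_nonneg hc b
  have h1 := carHazard_le_one hc1 b
  refine Real.tsum_le_of_sum_range_le (fun i => ?_) fun n => ?_
  · split_ifs
    exacts [hazardMass_nonneg h0 h1 i, le_rfl]
  · calc ∑ i ∈ range n, (if b i = true then hazardMass (carHazard c b) i else 0)
        = ∑ i ∈ range n with b i = true, hazardMass (carHazard c b) i := (sum_filter _ _).symm
      _ ≤ ∑ i ∈ range n with b i = true, carHazard c b i :=
        sum_le_sum fun i _ => hazardMass_le h0 h1 i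
      _ ≤ c := sum_carHazard_filter_le hc _

theorem tsum_prob_some_hazardStrategy (hc0 : 0 < c) {b : ℕ → Bool}
    (hb : {i | b i = true}.Finite) :
    ∑' i, (hazardStrategy c hc hc1).prob b (some i) = 1 :=
  (hasSum_hazardMass_one (carHazard_nonneg hc b) (carHazard_le_one hc1 b)
    (not_summable_carHazard hc0 hb)).tsum_eq

end HazardStrategy

/-- Puzzle 1: for every `δ > 0` there is a frog-strategy succeeding with probability
`≥ 1 - δ` on every car-stream containing only finitely many cars,
i.e. `Succ(S, A_{fin}) ≥ 1 - δ`. -/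
theorem puzzle1 (δ : ℝ) (hδ : 0 < δ) :
    ∃ S : FrogStrategy, ∀ b : ℕ → Bool,
      {i : ℕ | b i = true}.Finite → 1 - δ ≤ succProb S b := by
  have hc : 0 < min δ 1 := lt_min hδ one_pos
  have hc1 : min δ 1 ≤ 1 := min_le_right δ 1
  refine ⟨hazardStrategy (min δ 1) hc.le hc1, fun b hb => ?_⟩
  have hsplit := (hazardStrategy _ hc.le hc1).succProb_add_deathProb b
  rw [tsum_prob_some_hazardStrategy hc.le hc1 hc hb] at hsplit
  linarith [deathProb_hazardStrategy_le hc.le hc1 b, min_le_left δ 1]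
end
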